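/- Let γ̂_{m,a} > 0 be arbitrary positive numbers (a possibly misspecified propensity model) and let μ_{m,a} = E[Y | M=m, A=a, O=1] be the true conditional outcome means. Then under MAR (O ⟂ Y | (A,M)), the AIPW functional E[ Σ_{m} (1{M=m}/γ̂_{m,a}) ( Y·1{O=1} − (1{O=1} − γ̂_{m,a})·μ_{m,a} ) | A=a ] equals E[Y | A=a]. -/

import Mathlib

open scoped BigOperators Classical

/-- Probability of the event `S` under the weight function `p` on a finite sample space. -/
noncomputable def Pr {Ω : Type*} [Fintype Ω] (p : Ω → ℝ) (S : Ω → Prop) : ℝ :=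
  ∑ ω, if S ω then p ω else 0

/-- Conditional probability `P(S | T)` (by convention `0` if `P(T) = 0`). -/
noncomputable def CPr {Ω : Type*} [Fintype Ω] (p : Ω → ℝ) (S T : Ω → Prop) : ℝ :=
  Pr p (fun ω => S ω ∧ T ω) / Pr p T

/-- Conditional expectation `E[Y | S]` (by convention `0` if `P(S) = 0`). -/
noncomputable def CExp {Ω : Type*} [Fintype Ω] (p : Ω → ℝ) (Y : Ω → ℝ) (S : Ω → Prop) : ℝ :=
  (∑ ω, if S ω then p ω * Y ω else 0) / Pr p S

section AuxLemmas

variable {Ω : Type*} [Fintype Ω]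

/-- Instance-robust identification of `Pr` with an indicator sum. -/
lemma Pr_eq (p : Ω → ℝ) {S : Ω → Prop} {i : ∀ ω, Decidable (S ω)} {T : Ω → Prop}
    (h : ∀ ω, T ω ↔ S ω) :
    Pr p T = ∑ ω, @ite _ (S ω) (i ω) (p ω) 0 := by
  unfold Pr
  refine Finset.sum_congr rfl fun ω _ => ?_
  by_cases hs : S ω
  · rw [if_pos ((h ω).2 hs), if_pos hs]
  · rw [if_neg (fun ht => hs ((h ω).1 ht)), if_neg hs]

/-- Instance-robust congruence for indicator-weighted sums. -/
lemma sum_if_congr (f : Ω → ℝ) {S T : Ω → Prop}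
    {i : ∀ ω, Decidable (S ω)} {j : ∀ ω, Decidable (T ω)} (h : ∀ ω, S ω ↔ T ω) :
    (∑ ω, @ite _ (S ω) (i ω) (f ω) 0) = ∑ ω, @ite _ (T ω) (j ω) (f ω) 0 := by
  refine Finset.sum_congr rfl fun ω _ => ?_
  by_cases hs : S ω
  · rw [if_pos hs, if_pos ((h ω).1 hs)]
  · rw [if_neg hs, if_neg (fun ht => hs ((h ω).2 ht))]

lemma Pr_nonneg' (p : Ω → ℝ) (hp0 : ∀ ω, 0 ≤ p ω) (S : Ω → Prop) : 0 ≤ Pr p S := by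
  unfold Pr
  refine Finset.sum_nonneg fun ω _ => ?_
  split
  · exact hp0 ω
  · exact le_refl 0

lemma Pr_congr' (p : Ω → ℝ) {S T : Ω → Prop} (h : ∀ ω, S ω ↔ T ω) : Pr p S = Pr p T := by
  unfold Pr
  exact sum_if_congr p h

/-- Expand an indicator-weighted expectation over the (finite) range of `Y`. -/
lemma sum_ite_eq_sum_image' (p : Ω → ℝ) (Y : Ω → ℝ) {S : Ω → Prop}
    {i : ∀ ω, Decidable (S ω)} :
    (∑ ω, @ite _ (S ω) (i ω) (p ω * Y ω) 0)
      = ∑ y ∈ Finset.image Y Finset.univ, y * Pr p (fun ω => Y ω = y ∧ S ω) := by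
  have key : ∀ y : ℝ, y * Pr p (fun ω => Y ω = y ∧ S ω)
      = ∑ ω, (if Y ω = y ∧ S ω then y * p ω else 0) := by
    intro y
    unfold Pr
    rw [Finset.mul_sum]
    refine Finset.sum_congr rfl fun ω _ => ?_
    by_cases hc : Y ω = y ∧ S ω <;> simp [hc]
  simp_rw [key]
  rw [Finset.sum_comm]
  refine Finset.sum_congr rfl fun ω _ => ?_
  rw [Finset.sum_eq_single_of_mem (Y ω) (Finset.mem_image_of_mem Y (Finset.mem_univ ω))]
  · by_cases hs : S ω <;> simp [hs, mul_comm]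
  · intro y _ hy
    exact if_neg (fun hc => hy hc.1.symm)

end AuxLemmas

/-- **Double robustness of AIPW, case (ii): correct outcome model.** With arbitrary
positive (possibly misspecified) propensities `γ̂_{m,a} > 0` and the true conditional
outcome means `μ_{m,a} = E[Y | M=m, A=a, O=1]`, under MAR `O ⟂ Y | (A, M)` the AIPW
functional equals `E[Y | A=a]`. -/
theorem aipw_correct_outcome_model
    {Ω 𝓐 𝓜 : Type*} [Fintype Ω] [Fintype 𝓜]
    (p : Ω → ℝ) (hp0 : ∀ ω, 0 ≤ p ω) (hp1 : ∑ ω, p ω = 1)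
    (Y : Ω → ℝ) (M : Ω → 𝓜) (A : Ω → 𝓐) (O : Ω → ℕ)
    (hO : ∀ ω, O ω = 0 ∨ O ω = 1)
    -- conditional independence O ⟂ Y | (A, M)
    (hCI : ∀ (o : ℕ) (y : ℝ) (a : 𝓐) (m : 𝓜),
      Pr p (fun ω => O ω = o ∧ Y ω = y ∧ A ω = a ∧ M ω = m) *
        Pr p (fun ω => A ω = a ∧ M ω = m)
      = Pr p (fun ω => O ω = o ∧ A ω = a ∧ M ω = m) *
        Pr p (fun ω => Y ω = y ∧ A ω = a ∧ M ω = m))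
    (a : 𝓐) (hA : 0 < Pr p (fun ω => A ω = a))
    -- positivity of the true propensities
    (hpos : ∀ m, 0 < CPr p (fun ω => O ω = 1) (fun ω => M ω = m ∧ A ω = a))
    -- arbitrary positive (possibly misspecified) propensity model
    (γhat : 𝓜 → ℝ) (hγhat : ∀ m, 0 < γhat m)
    -- true conditional outcome means
    (μ : 𝓜 → ℝ)
    (hμ : ∀ m, μ m = CExp p Y (fun ω => M ω = m ∧ A ω = a ∧ O ω = 1)) :
    CExp p
      (fun ω => ∑ m : 𝓜,
        ((if M ω = m then (1:ℝ) else 0) / γhat m) *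
          ((if O ω = 1 then Y ω else 0)
            - ((if O ω = 1 then (1:ℝ) else 0) - γhat m) * μ m))
      (fun ω => A ω = a)
    = CExp p Y (fun ω => A ω = a) := by
  classical
  unfold CExp
  congr 1
  -- Named per-mediator quantities (raw sums with our own elaboration).
  have hT2pr : ∀ m : 𝓜, Pr p (fun ω => M ω = m ∧ A ω = a ∧ O ω = 1)
      = ∑ ω, (if A ω = a ∧ M ω = m ∧ O ω = 1 then p ω else 0) :=
    fun m => Pr_eq p (fun ω => by tauto)
  have hT3pr : ∀ m : 𝓜, Pr p (fun ω => A ω = a ∧ M ω = m)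
      = ∑ ω, (if A ω = a ∧ M ω = m then p ω else 0) :=
    fun m => Pr_eq p (fun ω => by tauto)
  -- positivity facts, transported to raw sums
  have hT3pos : ∀ m : 𝓜, 0 < ∑ ω, (if A ω = a ∧ M ω = m then p ω else 0) := by
    intro m
    have h := hpos m
    unfold CPr at h
    have hT : Pr p (fun ω => M ω = m ∧ A ω = a) ≠ 0 := by
      intro h0
      rw [h0, div_zero] at h
      exact lt_irrefl 0 h
    have hT' : 0 < Pr p (fun ω => M ω = m ∧ A ω = a) :=
      lt_of_le_of_ne (Pr_nonneg' p hp0 _) (Ne.symm hT)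
    calc (0:ℝ) < Pr p (fun ω => M ω = m ∧ A ω = a) := hT'
      _ = ∑ ω, (if A ω = a ∧ M ω = m then p ω else 0) := Pr_eq p (fun ω => by tauto)
  have hT2pos : ∀ m : 𝓜, 0 < ∑ ω, (if A ω = a ∧ M ω = m ∧ O ω = 1 then p ω else 0) := by
    intro m
    have h := hpos m
    unfold CPr at h
    have hT' : 0 < Pr p (fun ω => M ω = m ∧ A ω = a) := by
      calc (0:ℝ) < ∑ ω, (if A ω = a ∧ M ω = m then p ω else 0) := hT3pos m
        _ = Pr p (fun ω => M ω = m ∧ A ω = a) := (Pr_eq p (fun ω => by tauto)).symm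
    have hnum : 0 < Pr p (fun ω => O ω = 1 ∧ M ω = m ∧ A ω = a) := by
      have h2 := mul_pos h hT'
      rwa [div_mul_cancel₀ _ (ne_of_gt hT')] at h2
    calc (0:ℝ) < Pr p (fun ω => O ω = 1 ∧ M ω = m ∧ A ω = a) := hnum
      _ = ∑ ω, (if A ω = a ∧ M ω = m ∧ O ω = 1 then p ω else 0) :=
            Pr_eq p (fun ω => by tauto)
  -- μ m times the mass of (A=a, M=m, O=1) recovers the observed outcome sum
  have hMuE1 : ∀ m : 𝓜,
      μ m * (∑ ω, (if A ω = a ∧ M ω = m ∧ O ω = 1 then p ω else 0))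
        = ∑ ω, (if A ω = a ∧ M ω = m ∧ O ω = 1 then p ω * Y ω else 0) := by
    intro m
    have hμm : μ m = (∑ ω, (if A ω = a ∧ M ω = m ∧ O ω = 1 then p ω * Y ω else 0))
        / (∑ ω, (if A ω = a ∧ M ω = m ∧ O ω = 1 then p ω else 0)) := by
      rw [hμ m]
      unfold CExp
      congr 1
      · exact sum_if_congr _ (fun ω => by tauto)
      · exact hT2pr m
    rw [hμm, div_mul_cancel₀ _ (ne_of_gt (hT2pos m))]
  -- CI consequence
  have hCIeq : ∀ m : 𝓜,
      (∑ ω, (if A ω = a ∧ M ω = m ∧ O ω = 1 then p ω * Y ω else 0)) *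
        (∑ ω, (if A ω = a ∧ M ω = m then p ω else 0))
      = (∑ ω, (if A ω = a ∧ M ω = m ∧ O ω = 1 then p ω else 0)) *
        (∑ ω, (if A ω = a ∧ M ω = m then p ω * Y ω else 0)) := by
    intro m
    have h1 : (∑ ω, (if A ω = a ∧ M ω = m ∧ O ω = 1 then p ω * Y ω else 0))
        = ∑ y ∈ Finset.image Y Finset.univ,
            y * Pr p (fun ω => O ω = 1 ∧ Y ω = y ∧ A ω = a ∧ M ω = m) := by
      rw [sum_ite_eq_sum_image' p Y]
      exact Finset.sum_congr rfl fun y _ => by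
        rw [Pr_congr' p (S := fun ω => Y ω = y ∧ A ω = a ∧ M ω = m ∧ O ω = 1)
          (T := fun ω => O ω = 1 ∧ Y ω = y ∧ A ω = a ∧ M ω = m) (fun ω => by tauto)]
    have h2 : (∑ ω, (if A ω = a ∧ M ω = m then p ω * Y ω else 0))
        = ∑ y ∈ Finset.image Y Finset.univ,
            y * Pr p (fun ω => Y ω = y ∧ A ω = a ∧ M ω = m) := by
      rw [sum_ite_eq_sum_image' p Y]
    rw [h1, h2, ← hT3pr m, ← hT2pr m, Finset.sum_mul, Finset.mul_sum]
    refine Finset.sum_congr rfl fun y _ => ?_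
    have h := hCI 1 y a m
    have hre : Pr p (fun ω => O ω = 1 ∧ A ω = a ∧ M ω = m)
        = Pr p (fun ω => M ω = m ∧ A ω = a ∧ O ω = 1) := Pr_congr' p (fun ω => by tauto)
    have hre2 : Pr p (fun ω => A ω = a ∧ M ω = m)
        = Pr p (fun ω => A ω = a ∧ M ω = m) := rfl
    rw [mul_assoc, h, hre]
    ring
  -- hence μ m * mass(A=a, M=m) = full conditional outcome sum
  have hMuE2 : ∀ m : 𝓜,
      μ m * (∑ ω, (if A ω = a ∧ M ω = m then p ω else 0))
        = ∑ ω, (if A ω = a ∧ M ω = m then p ω * Y ω else 0) := by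
    intro m
    have hT2 := hT2pos m
    have key : (∑ ω, (if A ω = a ∧ M ω = m ∧ O ω = 1 then p ω else 0)) *
        (μ m * (∑ ω, (if A ω = a ∧ M ω = m then p ω else 0)))
        = (∑ ω, (if A ω = a ∧ M ω = m ∧ O ω = 1 then p ω else 0)) *
          (∑ ω, (if A ω = a ∧ M ω = m then p ω * Y ω else 0)) := by
      calc (∑ ω, (if A ω = a ∧ M ω = m ∧ O ω = 1 then p ω else 0)) *
            (μ m * (∑ ω, (if A ω = a ∧ M ω = m then p ω else 0)))
          = (μ m * (∑ ω, (if A ω = a ∧ M ω = m ∧ O ω = 1 then p ω else 0))) *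
            (∑ ω, (if A ω = a ∧ M ω = m then p ω else 0)) := by ring
        _ = (∑ ω, (if A ω = a ∧ M ω = m ∧ O ω = 1 then p ω * Y ω else 0)) *
            (∑ ω, (if A ω = a ∧ M ω = m then p ω else 0)) := by rw [hMuE1 m]
        _ = _ := hCIeq m
    exact mul_left_cancel₀ (ne_of_gt hT2) key
  -- Step 1: expand the AIPW numerator per mediator.
  have step1 :
      (∑ ω, if A ω = a then
          p ω * (∑ m : 𝓜, ((if M ω = m then (1:ℝ) else 0) / γhat m) *
            ((if O ω = 1 then Y ω else 0)
              - ((if O ω = 1 then (1:ℝ) else 0) - γhat m) * μ m)) else 0)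
        = ∑ m : 𝓜,
            ((γhat m)⁻¹ * (∑ ω, (if A ω = a ∧ M ω = m ∧ O ω = 1 then p ω * Y ω else 0))
            - μ m * (γhat m)⁻¹ * (∑ ω, (if A ω = a ∧ M ω = m ∧ O ω = 1 then p ω else 0))
            + μ m * (∑ ω, (if A ω = a ∧ M ω = m then p ω else 0))) := by
    have hstep : ∀ ω, (if A ω = a then
          p ω * (∑ m : 𝓜, ((if M ω = m then (1:ℝ) else 0) / γhat m) *
            ((if O ω = 1 then Y ω else 0)
              - ((if O ω = 1 then (1:ℝ) else 0) - γhat m) * μ m)) else 0)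
        = ∑ m : 𝓜, ((γhat m)⁻¹ * (if A ω = a ∧ M ω = m ∧ O ω = 1 then p ω * Y ω else 0)
          - μ m * (γhat m)⁻¹ * (if A ω = a ∧ M ω = m ∧ O ω = 1 then p ω else 0)
          + μ m * (if A ω = a ∧ M ω = m then p ω else 0)) := by
      intro ω
      by_cases hAa : A ω = a
      · rw [if_pos hAa, Finset.mul_sum]
        refine Finset.sum_congr rfl fun m _ => ?_
        have hγ : γhat m ≠ 0 := ne_of_gt (hγhat m)
        by_cases hM : M ω = m
        · by_cases hOω : O ω = 1
          · simp only [hAa, hM, hOω]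
            simp only [if_pos trivial, and_self, if_true, eq_self_iff_true, true_and]
            simp
            field_simp
            ring
          · simp [hAa, hM, hOω]
            field_simp
        · simp [hM]
      · rw [if_neg hAa]
        symm
        refine Finset.sum_eq_zero fun m _ => ?_
        simp [hAa]
    calc (∑ ω, if A ω = a then
          p ω * (∑ m : 𝓜, ((if M ω = m then (1:ℝ) else 0) / γhat m) *
            ((if O ω = 1 then Y ω else 0)
              - ((if O ω = 1 then (1:ℝ) else 0) - γhat m) * μ m)) else 0)
        = ∑ ω, ∑ m : 𝓜,
            ((γhat m)⁻¹ * (if A ω = a ∧ M ω = m ∧ O ω = 1 then p ω * Y ω else 0)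
            - μ m * (γhat m)⁻¹ * (if A ω = a ∧ M ω = m ∧ O ω = 1 then p ω else 0)
            + μ m * (if A ω = a ∧ M ω = m then p ω else 0)) :=
          Finset.sum_congr rfl fun ω _ => hstep ω
      _ = ∑ m : 𝓜, ∑ ω,
            ((γhat m)⁻¹ * (if A ω = a ∧ M ω = m ∧ O ω = 1 then p ω * Y ω else 0)
            - μ m * (γhat m)⁻¹ * (if A ω = a ∧ M ω = m ∧ O ω = 1 then p ω else 0)
            + μ m * (if A ω = a ∧ M ω = m then p ω else 0)) := Finset.sum_comm
      _ = _ := by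
          refine Finset.sum_congr rfl fun m _ => ?_
          rw [Finset.sum_add_distrib, Finset.sum_sub_distrib, ← Finset.mul_sum,
            ← Finset.mul_sum, ← Finset.mul_sum]
  rw [step1]
  -- Step 2: each per-mediator term simplifies.
  have step2 : ∀ m : 𝓜,
      ((γhat m)⁻¹ * (∑ ω, (if A ω = a ∧ M ω = m ∧ O ω = 1 then p ω * Y ω else 0))
            - μ m * (γhat m)⁻¹ * (∑ ω, (if A ω = a ∧ M ω = m ∧ O ω = 1 then p ω else 0))
            + μ m * (∑ ω, (if A ω = a ∧ M ω = m then p ω else 0)))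
        = ∑ ω, (if A ω = a ∧ M ω = m then p ω * Y ω else 0) := by
    intro m
    rw [← hMuE1 m, ← hMuE2 m]
    ring
  calc (∑ m : 𝓜,
            ((γhat m)⁻¹ * (∑ ω, (if A ω = a ∧ M ω = m ∧ O ω = 1 then p ω * Y ω else 0))
            - μ m * (γhat m)⁻¹ * (∑ ω, (if A ω = a ∧ M ω = m ∧ O ω = 1 then p ω else 0))
            + μ m * (∑ ω, (if A ω = a ∧ M ω = m then p ω else 0))))
      = ∑ m : 𝓜, ∑ ω, (if A ω = a ∧ M ω = m then p ω * Y ω else 0) :=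
        Finset.sum_congr rfl fun m _ => step2 m
    _ = ∑ ω, ∑ m : 𝓜, (if A ω = a ∧ M ω = m then p ω * Y ω else 0) := Finset.sum_comm
    _ = ∑ ω, (if A ω = a then p ω * Y ω else 0) := by
        refine Finset.sum_congr rfl fun ω _ => ?_
        by_cases hAa : A ω = a
        · rw [Finset.sum_eq_single_of_mem (M ω) (Finset.mem_univ _)]
          · simp [hAa]
          · intro m _ hm
            exact if_neg (fun hc => hm hc.2.symm)
        · rw [if_neg hAa]
          refine Finset.sum_eq_zero fun m _ => ?_
          simp [hAa]
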